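/- Let (M,h) be a 3-dimensional Riemannian manifold with orthonormal triad {m, ḿ, m̂}. Then the crossed shear of m equals the sum of crossed vorticities of the other two: Σ(ḿ,m̂) = ω̂(m,ḿ) + ώ(m,m̂), where ω_{ab} = P^c_a P^d_b ∇_{[c} u_{d]} is the vorticity of the corresponding unit field, and the arguments denote contraction with the indicated triad vectors. -/
import Mathlib


/-!
Pointwise formalization of the kinematic quantities of a unit vector field on a
3-dimensional Riemannian manifold.  At a fixed point, the metric is given by its
covariant components `h`, with inverse `hinv`; (co)vectors are given by their
covariant components, and `Du a b` denotes the components `∇_a u_b` of the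
covariant derivative (w.r.t. the Levi-Civita connection) of the unit covector
field `u`.  Metric compatibility of the Levi-Civita connection together with the
constancy of the scalar products of the triad is encoded through the
hypothesis that `dDot` (the covariant derivative of the scalar product of two of
the triad fields) vanishes.
-/

namespace Stmt1

noncomputable section

abbrev Idx := Fin 3
abbrev Vec := Idx → ℝ
abbrev Ten2 := Idx → Idx → ℝ

/-- Raise an index with the inverse metric: `u^a = h^{ab} u_b`. -/
def raise (hinv : Ten2) (u : Vec) : Vec := fun a => ∑ b, hinv a b * u b

/-- Scalar product of two covectors: `h^{ab} u_a v_b`. -/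
def dotInv (hinv : Ten2) (u v : Vec) : ℝ := ∑ a, ∑ b, hinv a b * u a * v b

/-- Projector orthogonal to the unit covector `u`: `P_{ab} = h_{ab} - u_a u_b`. -/
def proj (h : Ten2) (u : Vec) : Ten2 := fun a b => h a b - u a * u b

/-- Mixed projector `P^c_a = h^{ce} P_{ea}`. -/
def projMix (h hinv : Ten2) (u : Vec) : Ten2 := fun c a => ∑ e, hinv c e * proj h u e a

/-- Expansion tensor `κ_{ab} = P^c_a P^d_b ∇_{(c} u_{d)}`. -/
def expansion (h hinv : Ten2) (u : Vec) (Du : Ten2) : Ten2 := fun a b =>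
  ∑ c, ∑ d, projMix h hinv u c a * projMix h hinv u d b * ((Du c d + Du d c) / 2)

/-- Vorticity tensor `ω_{ab} = P^c_a P^d_b ∇_{[c} u_{d]}`. -/
def vorticity (h hinv : Ten2) (u : Vec) (Du : Ten2) : Ten2 := fun a b =>
  ∑ c, ∑ d, projMix h hinv u c a * projMix h hinv u d b * ((Du c d - Du d c) / 2)

/-- Expansion scalar `κ = P^{cd} κ_{cd}`. -/
def expScalar (h hinv : Ten2) (u : Vec) (Du : Ten2) : ℝ :=
  ∑ a, ∑ b, ∑ c, ∑ d, hinv a c * hinv b d * proj h u c d * expansion h hinv u Du a b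

/-- Shear tensor `Σ_{ab} = κ_{ab} - (1/2) P_{ab} κ`. -/
def shear (h hinv : Ten2) (u : Vec) (Du : Ten2) : Ten2 := fun a b =>
  expansion h hinv u Du a b - (1/2) * proj h u a b * expScalar h hinv u Du

/-- Contraction `T(v,w) = v^a w^b T_{ab}` of a covariant 2-tensor with two
raised covectors. -/
def contr2 (hinv : Ten2) (T : Ten2) (v w : Vec) : ℝ :=
  ∑ a, ∑ b, raise hinv v a * raise hinv w b * T a b

/-- Covariant derivative of the scalar product `h^{bc} u_b v_c` of two covector
fields: by metric compatibility of the Levi-Civita connection this is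
`h^{bc} (∇_a u_b v_c + u_b ∇_a v_c)`. -/
def dDot (hinv : Ten2) (u v : Vec) (Du Dv : Ten2) (a : Idx) : ℝ :=
  ∑ b, ∑ c, hinv b c * (Du a b * v c + u b * Dv a c)

lemma dotInv_symm (hinv : Ten2) (hinvsym : ∀ a b, hinv a b = hinv b a) (u v : Vec) :
    dotInv hinv u v = dotInv hinv v u := by
  simp only [dotInv, Fin.sum_univ_three]
  linear_combination u 0 * v 1 * hinvsym 0 1 + u 0 * v 2 * hinvsym 0 2 +
    u 1 * v 0 * hinvsym 1 0 + u 1 * v 2 * hinvsym 1 2 +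
    u 2 * v 0 * hinvsym 2 0 + u 2 * v 1 * hinvsym 2 1

lemma dDot_eq (hinv : Ten2) (hinvsym : ∀ a b, hinv a b = hinv b a)
    (u v : Vec) (Du Dv : Ten2) (a : Idx) :
    dDot hinv u v Du Dv a
      = (∑ b, raise hinv v b * Du a b) + (∑ c, raise hinv u c * Dv a c) := by
  simp only [dDot, raise, Fin.sum_univ_three]
  linear_combination u 0 * Dv a 1 * hinvsym 0 1 + u 0 * Dv a 2 * hinvsym 0 2 +
    u 1 * Dv a 0 * hinvsym 1 0 + u 1 * Dv a 2 * hinvsym 1 2 +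
    u 2 * Dv a 0 * hinvsym 2 0 + u 2 * Dv a 1 * hinvsym 2 1

lemma projMix_raise (h hinv : Ten2)
    (hinverse : ∀ a b, (∑ c, h a c * hinv c b) = if a = b then 1 else 0)
    (u v : Vec) (huv : dotInv hinv u v = 0) (c : Idx) :
    (∑ a, projMix h hinv u c a * raise hinv v a) = raise hinv v c := by
  have H : ∀ a b : Idx, (h a 0 * hinv 0 b + h a 1 * hinv 1 b + h a 2 * hinv 2 b)
      = if a = b then 1 else 0 := by
    intro a b; have := hinverse a b; simpa [Fin.sum_univ_three] using this
  have h00 := H 0 0; have h01 := H 0 1; have h02 := H 0 2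
  have h10 := H 1 0; have h11 := H 1 1; have h12 := H 1 2
  have h20 := H 2 0; have h21 := H 2 1; have h22 := H 2 2
  simp only [Fin.reduceEq, reduceIte, if_true, if_false] at h00 h01 h02 h10 h11 h12 h20 h21 h22
  simp only [dotInv, Fin.sum_univ_three] at huv
  simp only [projMix, proj, raise, Fin.sum_univ_three]
  linear_combination hinv c 0 * v 0 * h00 + hinv c 0 * v 1 * h01 + hinv c 0 * v 2 * h02 +
    hinv c 1 * v 0 * h10 + hinv c 1 * v 1 * h11 + hinv c 1 * v 2 * h12 +
    hinv c 2 * v 0 * h20 + hinv c 2 * v 1 * h21 + hinv c 2 * v 2 * h22 -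
    (hinv c 0 * u 0 + hinv c 1 * u 1 + hinv c 2 * u 2) * huv

lemma contr2_reduce (h hinv : Ten2)
    (hinverse : ∀ a b, (∑ c, h a c * hinv c b) = if a = b then 1 else 0)
    (u v w : Vec) (huv : dotInv hinv u v = 0) (huw : dotInv hinv u w = 0) (X : Ten2) :
    (∑ a, ∑ b, raise hinv v a * raise hinv w b *
        (∑ c, ∑ d, projMix h hinv u c a * projMix h hinv u d b * X c d))
      = ∑ c, ∑ d, raise hinv v c * raise hinv w d * X c d := by
  have hv := fun c => projMix_raise h hinv hinverse u v huv c
  have hw := fun d => projMix_raise h hinv hinverse u w huw d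
  calc (∑ a, ∑ b, raise hinv v a * raise hinv w b *
        (∑ c, ∑ d, projMix h hinv u c a * projMix h hinv u d b * X c d))
      = ∑ c, ∑ d, (∑ a, projMix h hinv u c a * raise hinv v a) *
          (∑ b, projMix h hinv u d b * raise hinv w b) * X c d := by
        simp only [Fin.sum_univ_three]; ring
    _ = ∑ c, ∑ d, raise hinv v c * raise hinv w d * X c d := by
        simp only [hv, hw]

lemma contr2_proj_eval (h hinv : Ten2)
    (hinvsym : ∀ a b, hinv a b = hinv b a)
    (hinverse : ∀ a b, (∑ c, h a c * hinv c b) = if a = b then 1 else 0)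
    (u v w : Vec) :
    (∑ a, ∑ b, raise hinv v a * raise hinv w b * proj h u a b)
      = dotInv hinv v w - dotInv hinv u v * dotInv hinv u w := by
  have H : ∀ a b : Idx, (h a 0 * hinv 0 b + h a 1 * hinv 1 b + h a 2 * hinv 2 b)
      = if a = b then 1 else 0 := by
    intro a b; have := hinverse a b; simpa [Fin.sum_univ_three] using this
  have h00 := H 0 0; have h01 := H 0 1; have h02 := H 0 2
  have h10 := H 1 0; have h11 := H 1 1; have h12 := H 1 2
  have h20 := H 2 0; have h21 := H 2 1; have h22 := H 2 2
  simp only [Fin.reduceEq, reduceIte, if_true, if_false] at h00 h01 h02 h10 h11 h12 h20 h21 h22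
  simp only [proj, raise, dotInv, Fin.sum_univ_three]
  linear_combination
    (hinv 0 0 * v 0 + hinv 0 1 * v 1 + hinv 0 2 * v 2) * w 0 * h00 +
    (hinv 0 0 * v 0 + hinv 0 1 * v 1 + hinv 0 2 * v 2) * w 1 * h01 +
    (hinv 0 0 * v 0 + hinv 0 1 * v 1 + hinv 0 2 * v 2) * w 2 * h02 +
    (hinv 1 0 * v 0 + hinv 1 1 * v 1 + hinv 1 2 * v 2) * w 0 * h10 +
    (hinv 1 0 * v 0 + hinv 1 1 * v 1 + hinv 1 2 * v 2) * w 1 * h11 +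
    (hinv 1 0 * v 0 + hinv 1 1 * v 1 + hinv 1 2 * v 2) * w 2 * h12 +
    (hinv 2 0 * v 0 + hinv 2 1 * v 1 + hinv 2 2 * v 2) * w 0 * h20 +
    (hinv 2 0 * v 0 + hinv 2 1 * v 1 + hinv 2 2 * v 2) * w 1 * h21 +
    (hinv 2 0 * v 0 + hinv 2 1 * v 1 + hinv 2 2 * v 2) * w 2 * h22 +
    v 1 * w 0 * hinvsym 0 1 + v 2 * w 0 * hinvsym 0 2 +
    v 0 * w 1 * hinvsym 1 0 + v 2 * w 1 * hinvsym 1 2 +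
    v 0 * w 2 * hinvsym 2 0 + v 1 * w 2 * hinvsym 2 1

set_option maxHeartbeats 2000000 in
/-- For an orthonormal triad `{m, ḿ, m̂}` on a 3-dimensional
Riemannian manifold, the crossed shear of `m` equals the sum of the crossed
vorticities of the other two: `Σ(ḿ,m̂) = ω̂(m,ḿ) + ώ(m,m̂)`. -/
theorem crossed_shear_eq_sum_of_crossed_vorticities
    (h hinv : Ten2)
    (hsym : ∀ a b, h a b = h b a)
    (hinvsym : ∀ a b, hinv a b = hinv b a)
    (hinverse : ∀ a b, (∑ c, h a c * hinv c b) = if a = b then 1 else 0)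
    (m m' m'' : Vec)
    (hu1 : dotInv hinv m m = 1) (hu2 : dotInv hinv m' m' = 1) (hu3 : dotInv hinv m'' m'' = 1)
    (ho12 : dotInv hinv m m' = 0) (ho13 : dotInv hinv m m'' = 0) (ho23 : dotInv hinv m' m'' = 0)
    (Dm Dm' Dm'' : Ten2)
    (c11 : ∀ a, dDot hinv m m Dm Dm a = 0)
    (c22 : ∀ a, dDot hinv m' m' Dm' Dm' a = 0)
    (c33 : ∀ a, dDot hinv m'' m'' Dm'' Dm'' a = 0)
    (c12 : ∀ a, dDot hinv m m' Dm Dm' a = 0)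
    (c13 : ∀ a, dDot hinv m m'' Dm Dm'' a = 0)
    (c23 : ∀ a, dDot hinv m' m'' Dm' Dm'' a = 0) :
    contr2 hinv (shear h hinv m Dm) m' m''
      = contr2 hinv (vorticity h hinv m'' Dm'') m m'
        + contr2 hinv (vorticity h hinv m' Dm') m m'' := by
  have ho21 : dotInv hinv m' m = 0 := by rw [dotInv_symm hinv hinvsym]; exact ho12
  have ho31 : dotInv hinv m'' m = 0 := by rw [dotInv_symm hinv hinvsym]; exact ho13
  have ho32 : dotInv hinv m'' m' = 0 := by rw [dotInv_symm hinv hinvsym]; exact ho23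
  have hE := contr2_reduce h hinv hinverse m m' m'' ho12 ho13
    (fun c d => (Dm c d + Dm d c) / 2)
  have hV2 := contr2_reduce h hinv hinverse m'' m m' ho31 ho32
    (fun c d => (Dm'' c d - Dm'' d c) / 2)
  have hV1 := contr2_reduce h hinv hinverse m' m m'' ho21 ho23
    (fun c d => (Dm' c d - Dm' d c) / 2)
  have hP : (∑ a, ∑ b, raise hinv m' a * raise hinv m'' b * proj h m a b) = 0 := by
    rw [contr2_proj_eval h hinv hinvsym hinverse m m' m'', ho12, ho13, ho23]; ring
  have rel12 : ∀ a, (∑ b, raise hinv m' b * Dm a b) + (∑ c, raise hinv m c * Dm' a c) = 0 :=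
    fun a => by rw [← dDot_eq hinv hinvsym m m' Dm Dm' a]; exact c12 a
  have rel13 : ∀ a, (∑ b, raise hinv m'' b * Dm a b) + (∑ c, raise hinv m c * Dm'' a c) = 0 :=
    fun a => by rw [← dDot_eq hinv hinvsym m m'' Dm Dm'' a]; exact c13 a
  have rel23 : ∀ a, (∑ b, raise hinv m'' b * Dm' a b) + (∑ c, raise hinv m' c * Dm'' a c) = 0 :=
    fun a => by rw [← dDot_eq hinv hinvsym m' m'' Dm' Dm'' a]; exact c23 a
  simp only [contr2, shear, expansion, vorticity]
  simp only [Fin.sum_univ_three] at hE hV2 hV1 hP rel12 rel13 rel23 ⊢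
  linear_combination hE - hV2 - hV1 - (1/2) * expScalar h hinv m Dm * hP +
    (1/2) * ( raise hinv m' 0 * rel13 0 + raise hinv m' 1 * rel13 1 + raise hinv m' 2 * rel13 2
      + raise hinv m'' 0 * rel12 0 + raise hinv m'' 1 * rel12 1 + raise hinv m'' 2 * rel12 2
      - raise hinv m 0 * rel23 0 - raise hinv m 1 * rel23 1 - raise hinv m 2 * rel23 2 )

end
end Stmt1
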